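/- Let m ≥ 2 and let a_1,…,a_m be positive integers with gcd(a_1,…,a_m) = 1 satisfying the telescopic condition, and set N = −a_1 + Σ_{i=2}^m a_i(d_{i−1}/d_i − 1). If N ≥ 0, then N cannot be written as a_1x_1 + ⋯ + a_mx_m with nonnegative integers x_1,…,x_m; consequently N is the greatest integer that is not representable (the Frobenius number equals Brauer's bound). -/

import Mathlib

/-!
Write `d_i = gcd(a_1, …, a_i)` and `c_i = d_{i-1}/d_i`. Since `a_i/d_i` is a unit modulo `c_i`,
every multiple of `d_i` has a representation `a_1 x_1 + ∑_{j=2}^i a_j x_j` with `x_1 ∈ ℤ` and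
digits `0 ≤ x_j < c_j`, and this representation is unique: a difference of two of them with
`|z_j| < c_j` must have `z_i = 0`, because `d_{i-1}` divides everything else. Taking `i = m`,
the digit representation of any `n > N` has `x_1 ≥ 0`, as `∑_{j ≥ 2} a_j x_j ≤ N + a_1`.
On the other hand the telescopic condition says that `c_i a_i` is a nonnegative combination of
`a_1, …, a_{i-1}`, so a nonnegative representation can be carried into digit form keeping
`x_1 ≥ 0`; by uniqueness this is impossible for `N`, whose digit representation is
`x_1 = -1`, `x_j = c_j - 1`.
-/

/-- `dseq a i = gcd(a_1, …, a_i)`. -/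
def dseq (a : ℕ → ℕ) (i : ℕ) : ℕ := (Finset.Icc 1 i).gcd a

/-- The telescopic condition:
`a_i/d_i ∈ (a_1/d_{i-1})ℤ_{≥0} + ⋯ + (a_{i-1}/d_{i-1})ℤ_{≥0}` for `2 ≤ i ≤ m`. -/
def Telescopic (m : ℕ) (a : ℕ → ℕ) : Prop :=
  ∀ i, 2 ≤ i → i ≤ m →
    ∃ k : ℕ → ℕ,
      a i / dseq a i = ∑ j ∈ Finset.Icc 1 (i - 1), (a j / dseq a (i - 1)) * k j

open Finset Function

def dseqQuot (a : ℕ → ℕ) (i : ℕ) : ℕ := dseq a (i - 1) / dseq a i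

def brauerBound (m : ℕ) (a : ℕ → ℕ) : ℤ :=
  -(a 1 : ℤ) + ∑ i ∈ Icc 2 m, (a i : ℤ) * ((dseqQuot a i : ℤ) - 1)

def Representable (m : ℕ) (a : ℕ → ℕ) (n : ℤ) : Prop :=
  ∃ x : ℕ → ℕ, n = ∑ i ∈ Icc 1 m, (a i : ℤ) * (x i : ℤ)

lemma sum_Icc_one_eq_add_sum_Icc_two {M : Type*} [AddCommMonoid M] {m : ℕ} (hm : 1 ≤ m)
    (f : ℕ → M) : ∑ i ∈ Icc 1 m, f i = f 1 + ∑ i ∈ Icc 2 m, f i := by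
  rw [← insert_Icc_add_one_left_eq_Icc hm, sum_insert (by simp)]
  rfl

lemma sum_Icc_succ_top_update (a x : ℕ → ℕ) {lo i : ℕ} (h : lo ≤ i + 1) (y : ℕ) :
    ∑ j ∈ Icc lo (i + 1), (a j : ℤ) * (update x (i + 1) y j : ℕ) =
      ∑ j ∈ Icc lo i, (a j : ℤ) * x j + a (i + 1) * y := by
  rw [sum_Icc_succ_top h, update_self]
  congr 1
  exact sum_congr rfl fun j hj => by rw [update_of_ne (by simp only [mem_Icc] at hj; omega)]

lemma forall_mem_Icc_succ_update_lt {lo i : ℕ} {x c : ℕ → ℕ} {y : ℕ}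
    (hx : ∀ j ∈ Icc lo i, x j < c j) (hy : y < c (i + 1)) :
    ∀ j ∈ Icc lo (i + 1), update x (i + 1) y j < c j := by
  intro j hj
  rcases eq_or_ne j (i + 1) with rfl | hne
  · rwa [update_self]
  · rw [update_of_ne hne]
    exact hx j (by simp only [mem_Icc] at hj ⊢; omega)

section dseq

variable {a : ℕ → ℕ}

lemma dseq_one : dseq a 1 = a 1 := by simp [dseq]

lemma dseq_succ (i : ℕ) : dseq a (i + 1) = (a (i + 1)).gcd (dseq a i) := by
  rw [dseq, ← insert_Icc_right_eq_Icc_add_one (by omega), gcd_insert]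
  rfl

lemma dseq_dvd {i j : ℕ} (hj : j ∈ Icc 1 i) : dseq a i ∣ a j := gcd_dvd hj

lemma dseq_pos (ha : 0 < a 1) {i : ℕ} (hi : 1 ≤ i) : 0 < dseq a i :=
  Nat.pos_of_dvd_of_pos (dseq_dvd (by simp [hi])) ha

lemma dseqQuot_succ (i : ℕ) : dseqQuot a (i + 1) = dseq a i / (a (i + 1)).gcd (dseq a i) := by
  rw [dseqQuot, dseq_succ, Nat.add_sub_cancel]

lemma dseqQuot_succ_pos (ha : 0 < a 1) {i : ℕ} (hi : 1 ≤ i) : 0 < dseqQuot a (i + 1) := by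
  rw [dseqQuot_succ]
  have hd := dseq_pos ha hi
  exact Nat.div_pos (Nat.gcd_le_right _ hd) (Nat.gcd_pos_of_pos_right _ hd)

end dseq

lemma exists_lt_dvd_sub_mul_of_coprime {u c : ℕ} (hc : 0 < c) (hu : u.Coprime c) (n : ℤ) :
    ∃ x < c, (c : ℤ) ∣ n - u * x := by
  have : NeZero c := ⟨hc.ne'⟩
  have hunit : IsUnit (u : ZMod c) := (ZMod.isUnit_iff_coprime u c).2 hu
  refine ⟨((u : ZMod c)⁻¹ * n).val, ZMod.val_lt _, ?_⟩
  rw [← ZMod.intCast_zmod_eq_zero_iff_dvd]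
  push_cast
  rw [ZMod.natCast_val, ZMod.cast_id, ← mul_assoc, ZMod.mul_inv_of_unit _ hunit, one_mul,
    sub_self]

lemma exists_lt_div_gcd_dvd_sub_mul {b D : ℕ} (hD : 0 < D) {n : ℤ} (hn : (b.gcd D : ℤ) ∣ n) :
    ∃ x < D / b.gcd D, (D : ℤ) ∣ n - b * x := by
  set g := b.gcd D
  have hg : 0 < g := Nat.gcd_pos_of_pos_right b hD
  obtain ⟨n, rfl⟩ := hn
  obtain ⟨x, hx, hdvd⟩ := exists_lt_dvd_sub_mul_of_coprime
    (Nat.div_pos (Nat.gcd_le_right _ hD) hg) (Nat.coprime_div_gcd_div_gcd hg) n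
  refine ⟨x, hx, ?_⟩
  have hb : (b : ℤ) = g * (b / g : ℕ) := by
    exact_mod_cast (Nat.mul_div_cancel' (b.gcd_dvd_left D)).symm
  have hD' : (D : ℤ) = g * (D / g : ℕ) := by
    exact_mod_cast (Nat.mul_div_cancel' (b.gcd_dvd_right D)).symm
  rw [hD', hb, mul_assoc, ← mul_sub]
  exact mul_dvd_mul_left _ hdvd

lemma eq_zero_of_dvd_mul_of_abs_lt {b D : ℕ} {z : ℤ} (h : (D : ℤ) ∣ b * z)
    (hz : |z| < (D / b.gcd D : ℕ)) : z = 0 := by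
  rcases Nat.eq_zero_or_pos D with rfl | hD
  · simp only [Nat.zero_div, Nat.cast_zero] at hz
    linarith [abs_nonneg z]
  have hmod : z ≡ 0 [ZMOD D / (D : ℤ).gcd b] :=
    Int.ModEq.cancel_left_div_gcd (by exact_mod_cast hD)
      (by rw [mul_zero]; exact Int.modEq_zero_iff_dvd.2 h)
  rw [Int.gcd_natCast_natCast, Nat.gcd_comm, ← Int.natCast_div] at hmod
  exact Int.eq_zero_of_abs_lt_dvd (Int.modEq_zero_iff_dvd.1 hmod) hz

lemma exists_eq_add_sum_of_dseq_dvd {a : ℕ → ℕ} (ha : 0 < a 1) {i : ℕ} (hi : 1 ≤ i) {n : ℤ}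
    (hn : (dseq a i : ℤ) ∣ n) :
    ∃ (x₁ : ℤ) (x : ℕ → ℕ), (∀ j ∈ Icc 2 i, x j < dseqQuot a j) ∧
      n = a 1 * x₁ + ∑ j ∈ Icc 2 i, (a j : ℤ) * x j := by
  induction i, hi using Nat.le_induction generalizing n with
  | base =>
    rw [dseq_one] at hn
    obtain ⟨x₁, rfl⟩ := hn
    exact ⟨x₁, 0, fun j hj => by simp at hj, by simp⟩
  | succ i hi ih =>
    rw [dseq_succ] at hn
    obtain ⟨y, hy, hdvd⟩ := exists_lt_div_gcd_dvd_sub_mul (dseq_pos ha hi) hn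
    obtain ⟨x₁, x, hx, hrepr⟩ := ih hdvd
    refine ⟨x₁, update x (i + 1) y,
      forall_mem_Icc_succ_update_lt hx (by rwa [dseqQuot_succ]), ?_⟩
    rw [sum_Icc_succ_top_update a x (by omega)]
    linear_combination hrepr

lemma Telescopic.exists_dseqQuot_mul_eq_sum {m : ℕ} {a : ℕ → ℕ} (htel : Telescopic m a)
    {i : ℕ} (hi : 1 ≤ i) (him : i + 1 ≤ m) :
    ∃ k : ℕ → ℕ, dseqQuot a (i + 1) * a (i + 1) = ∑ j ∈ Icc 1 i, a j * k j := by
  obtain ⟨k, hk⟩ := htel (i + 1) (by omega) him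
  rw [Nat.add_sub_cancel] at hk
  refine ⟨k, ?_⟩
  have hdvd : dseq a (i + 1) ∣ dseq a i := by rw [dseq_succ]; exact Nat.gcd_dvd_right _ _
  rw [dseqQuot, Nat.add_sub_cancel, Nat.div_mul_right_comm hdvd,
    Nat.mul_div_assoc _ (dseq_dvd (by simp)), hk, mul_sum]
  refine sum_congr rfl fun j hj => ?_
  rw [← mul_assoc, Nat.mul_div_cancel' (dseq_dvd hj)]

lemma Telescopic.exists_sum_eq_sum_digits {m : ℕ} {a : ℕ → ℕ} (htel : Telescopic m a)
    (ha : 0 < a 1) {i : ℕ} (hi : 1 ≤ i) (him : i ≤ m) (y : ℕ → ℕ) :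
    ∃ x : ℕ → ℕ, (∀ j ∈ Icc 2 i, x j < dseqQuot a j) ∧
      ∑ j ∈ Icc 1 i, (a j : ℤ) * y j = ∑ j ∈ Icc 1 i, (a j : ℤ) * x j := by
  induction i, hi using Nat.le_induction generalizing y with
  | base => exact ⟨y, fun j hj => by simp at hj, rfl⟩
  | succ i hi ih =>
    obtain ⟨k, hk⟩ := htel.exists_dseqQuot_mul_eq_sum hi him
    set c := dseqQuot a (i + 1)
    set q := y (i + 1) / c
    -- `q` copies of `c a_{i+1}` are traded for `q k_j` more copies of each `a_j`, `j ≤ i`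
    obtain ⟨x, hx, hxy⟩ := ih (by omega) fun j => y j + q * k j
    refine ⟨update x (i + 1) (y (i + 1) % c),
      forall_mem_Icc_succ_update_lt hx (Nat.mod_lt _ (dseqQuot_succ_pos ha hi)), ?_⟩
    have hk' : (c : ℤ) * a (i + 1) = ∑ j ∈ Icc 1 i, (a j : ℤ) * k j := by exact_mod_cast hk
    have hy : (y (i + 1) : ℤ) = c * q + (y (i + 1) % c : ℕ) := by
      exact_mod_cast (Nat.div_add_mod _ _).symm
    rw [sum_Icc_succ_top_update a x (by omega), ← hxy, sum_Icc_succ_top (by omega), hy]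
    push_cast
    simp only [mul_add, sum_add_distrib, mul_left_comm _ (q : ℤ), ← mul_sum, ← hk']
    ring

lemma mul_eq_zero_of_add_sum_eq_zero (a : ℕ → ℕ) {s : ℤ} {z : ℕ → ℤ} {i : ℕ}
    (hz : ∀ j ∈ Icc 2 i, |z j| < dseqQuot a j)
    (h : a 1 * s + ∑ j ∈ Icc 2 i, (a j : ℤ) * z j = 0) : (a 1 : ℤ) * s = 0 := by
  induction i with
  | zero => simpa using h
  | succ i ih =>
    rcases Nat.eq_zero_or_pos i with rfl | hi
    · simpa using h
    rw [sum_Icc_succ_top (by omega), ← add_assoc] at h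
    have hda (j : ℕ) (hj : j ∈ Icc 1 i) : (dseq a i : ℤ) ∣ a j :=
      Int.natCast_dvd_natCast.2 (dseq_dvd hj)
    have hrest : (dseq a i : ℤ) ∣ a 1 * s + ∑ j ∈ Icc 2 i, (a j : ℤ) * z j :=
      dvd_add ((hda 1 (by simp only [mem_Icc]; omega)).mul_right s)
        (dvd_sum fun j hj => (hda j (by simp only [mem_Icc] at hj ⊢; omega)).mul_right (z j))
    have hlast : (dseq a i : ℤ) ∣ a (i + 1) * z (i + 1) :=
      (dvd_add_right hrest).1 (h ▸ dvd_zero _)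
    have hz0 : z (i + 1) = 0 := eq_zero_of_dvd_mul_of_abs_lt hlast
      (by rw [← dseqQuot_succ]; exact hz (i + 1) (by simp only [mem_Icc]; omega))
    rw [hz0, mul_zero, add_zero] at h
    exact ih (fun j hj => hz j (Icc_subset_Icc_right (by omega) hj)) h

lemma Telescopic.not_representable_brauerBound {m : ℕ} {a : ℕ → ℕ} (htel : Telescopic m a)
    (ha : 0 < a 1) (hm : 1 ≤ m) : ¬ Representable m a (brauerBound m a) := by
  rintro ⟨y, hy⟩
  obtain ⟨x, hx, hxy⟩ := htel.exists_sum_eq_sum_digits ha hm le_rfl y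
  rw [hxy, sum_Icc_one_eq_add_sum_Icc_two hm] at hy
  have hzero := mul_eq_zero_of_add_sum_eq_zero a (s := x 1 + 1)
    (z := fun j => x j - (dseqQuot a j - 1)) (i := m)
    (fun j hj => by have := hx j hj; rw [abs_lt]; constructor <;> omega)
    (by simp only [brauerBound, mul_sub, sum_sub_distrib] at hy ⊢; linarith)
  have : 0 < (a 1 : ℤ) * (x 1 + 1) := by positivity
  exact this.ne' hzero

lemma representable_of_brauerBound_lt {m : ℕ} {a : ℕ → ℕ} (ha : 0 < a 1) (hm : 1 ≤ m)
    (hgcd : dseq a m = 1) {n : ℤ} (hn : brauerBound m a < n) : Representable m a n := by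
  obtain ⟨x₁, x, hx, hrepr⟩ := exists_eq_add_sum_of_dseq_dvd ha hm (n := n) (by simp [hgcd])
  have hdigits :
      ∑ j ∈ Icc 2 m, (a j : ℤ) * x j ≤ ∑ j ∈ Icc 2 m, (a j : ℤ) * (dseqQuot a j - 1) :=
    sum_le_sum fun j hj => mul_le_mul_of_nonneg_left (by have := hx j hj; omega) (by positivity)
  have hx₁ : 0 ≤ x₁ := by
    by_contra! hneg
    have : (a 1 : ℤ) * (x₁ + 1) ≤ 0 :=
      mul_nonpos_of_nonneg_of_nonpos (by positivity) (by omega)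
    simp only [brauerBound] at hn
    linarith
  refine ⟨update x 1 x₁.toNat, ?_⟩
  rw [sum_Icc_one_eq_add_sum_Icc_two hm, update_self, Int.toNat_of_nonneg hx₁, hrepr]
  congr 1
  exact sum_congr rfl fun j hj => by rw [update_of_ne (by simp only [mem_Icc] at hj; omega)]

theorem telescopic_frobenius_number_general
    (m : ℕ) (a : ℕ → ℕ)
    (hpos : ∀ i, 1 ≤ i → i ≤ m → 0 < a i)
    (hgcd : (Finset.Icc 1 m).gcd a = 1)
    (htel : Telescopic m a)
    (N : ℤ)
    (hN : N = -(a 1 : ℤ) + ∑ i ∈ Finset.Icc 2 m,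
        (a i : ℤ) * (((dseq a (i - 1) / dseq a i : ℕ) : ℤ) - 1)) :
    (¬ ∃ x : ℕ → ℕ, N = ∑ i ∈ Finset.Icc 1 m, (a i : ℤ) * (x i : ℤ)) ∧
      (∀ n : ℤ, N < n → ∃ x : ℕ → ℕ, n = ∑ i ∈ Finset.Icc 1 m, (a i : ℤ) * (x i : ℤ)) := by
  have hm : 1 ≤ m := Nat.pos_of_ne_zero fun h => by simp [h] at hgcd
  have ha : 0 < a 1 := hpos 1 le_rfl hm
  change N = brauerBound m a at hN
  subst hN
  exact ⟨htel.not_representable_brauerBound ha hm,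
    fun n hn => representable_of_brauerBound_lt ha hm hgcd hn⟩

/-- For a telescopic sequence the Frobenius number equals Brauer's bound:
`N = -a_1 + ∑_{i=2}^m a_i (d_{i-1}/d_i - 1)` is not representable (when `N ≥ 0`),
and every integer greater than `N` is representable, so `N` is the greatest
non-representable integer. -/
theorem telescopic_frobenius_number
    (m : ℕ) (hm : 2 ≤ m) (a : ℕ → ℕ)
    (hpos : ∀ i, 1 ≤ i → i ≤ m → 0 < a i)
    (hgcd : (Finset.Icc 1 m).gcd a = 1)
    (htel : Telescopic m a)
    (N : ℤ)
    (hN : N = -(a 1 : ℤ) + ∑ i ∈ Finset.Icc 2 m,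
        (a i : ℤ) * (((dseq a (i - 1) / dseq a i : ℕ) : ℤ) - 1))
    (hN0 : 0 ≤ N) :
    (¬ ∃ x : ℕ → ℕ, N = ∑ i ∈ Finset.Icc 1 m, (a i : ℤ) * (x i : ℤ)) ∧
      (∀ n : ℤ, N < n → ∃ x : ℕ → ℕ, n = ∑ i ∈ Finset.Icc 1 m, (a i : ℤ) * (x i : ℤ)) :=
  telescopic_frobenius_number_general m a hpos hgcd htel N hN
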